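/- Consider the closed-loop system ẋ = f̂(x) + û(x), where f̂ : ℝ^d → ℝ^d is any map and û is the Sontag feedback: with a(y) = ⟨∇V(y), f̂(y)⟩ and ρ(y) = ρ₀·√(a(y)² + ‖∇V(y)‖⁴) for a constant ρ₀ > 0, set û(y) = −(a(y) + ρ(y))·∇V(y)/‖∇V(y)‖² if ∇V(y) ≠ 0 and a(y) + ρ(y) > 0, and û(y) = 0 otherwise. Let λ > 0 satisfy ⟨x, P₀ x⟩ ≥ λ‖x‖² for all x. Then every differentiable solution x : [0,∞) → ℝ^d with x′(t) = f̂(x(t)) + û(x(t)) for all t ≥ 0 satisfies V(x(t)) ≤ V(x(0))·exp(−ρ₀ λ t) and ‖x(t)‖² ≤ (V(x(0))/λ)·exp(−ρ₀ λ t) for all t ≥ 0; in particular the origin is globally exponentially stable for the closed loop. -/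

import Mathlib

/-!
The penalty terms make `V` grow at least quadratically along rays, in the sense that
`2 V(x) ≤ ⟨∇V(x), x⟩`; together with `λ‖x‖² ≤ V(x)` and Cauchy–Schwarz this gives
`4 λ V ≤ ‖∇V‖²`. Sontag's formula is built so that `⟨∇V, f̂ + û⟩ ≤ -ρ₀ ‖∇V‖²` whatever `f̂` is,
because `ρ ≥ ρ₀ ‖∇V‖²`. Hence `V(x(t))` satisfies `d/dt V ≤ -ρ₀ λ V`, and Grönwall's inequality
gives the exponential decay of `V`, and of `‖x‖²` through `λ‖x‖² ≤ V`.
-/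

open scoped RealInnerProductSpace BigOperators

/-- Action of a `d × d` real matrix on `ℝ^d` (Euclidean space). -/
noncomputable def mApp {d : ℕ} (P : Matrix (Fin d) (Fin d) ℝ)
    (x : EuclideanSpace ℝ (Fin d)) : EuclideanSpace ℝ (Fin d) :=
  Matrix.toEuclideanLin P x

/-- `σ(x) = ⟨x, P(x − μ)⟩`. -/
noncomputable def sig {d : ℕ} (P : Matrix (Fin d) (Fin d) ℝ)
    (μ x : EuclideanSpace ℝ (Fin d)) : ℝ :=
  ⟪x, mApp P (x - μ)⟫

/-- Candidate control Lyapunov function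
`V(x) = ⟨x, P₀ x⟩ + Σ_{l=1}^{L} max(σ_l(x), 0)²`. -/
noncomputable def V {d L : ℕ} (P₀ : Matrix (Fin d) (Fin d) ℝ)
    (P : Fin L → Matrix (Fin d) (Fin d) ℝ) (μ : Fin L → EuclideanSpace ℝ (Fin d))
    (x : EuclideanSpace ℝ (Fin d)) : ℝ :=
  ⟪x, mApp P₀ x⟫ + ∑ l, max (sig (P l) (μ l) x) 0 ^ 2

/-- The gradient formula
`∇V(x) = 2 P₀ x + 2 Σ_{l=1}^{L} max(σ_l(x), 0) · P_l (2x − μ_l)`. -/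
noncomputable def gradV {d L : ℕ} (P₀ : Matrix (Fin d) (Fin d) ℝ)
    (P : Fin L → Matrix (Fin d) (Fin d) ℝ) (μ : Fin L → EuclideanSpace ℝ (Fin d))
    (x : EuclideanSpace ℝ (Fin d)) : EuclideanSpace ℝ (Fin d) :=
  (2 : ℝ) • mApp P₀ x +
    (2 : ℝ) • ∑ l, max (sig (P l) (μ l) x) 0 • mApp (P l) ((2 : ℝ) • x - μ l)

/-- `a(y) = ⟨∇V(y), f̂(y)⟩`. -/
noncomputable def aFun {d L : ℕ} (P₀ : Matrix (Fin d) (Fin d) ℝ)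
    (P : Fin L → Matrix (Fin d) (Fin d) ℝ) (μ : Fin L → EuclideanSpace ℝ (Fin d))
    (fhat : EuclideanSpace ℝ (Fin d) → EuclideanSpace ℝ (Fin d))
    (y : EuclideanSpace ℝ (Fin d)) : ℝ :=
  ⟪gradV P₀ P μ y, fhat y⟫

/-- `ρ(y) = ρ₀·√(a(y)² + ‖∇V(y)‖⁴)`. -/
noncomputable def rhoFun {d L : ℕ} (P₀ : Matrix (Fin d) (Fin d) ℝ)
    (P : Fin L → Matrix (Fin d) (Fin d) ℝ) (μ : Fin L → EuclideanSpace ℝ (Fin d))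
    (fhat : EuclideanSpace ℝ (Fin d) → EuclideanSpace ℝ (Fin d)) (ρ₀ : ℝ)
    (y : EuclideanSpace ℝ (Fin d)) : ℝ :=
  ρ₀ * Real.sqrt (aFun P₀ P μ fhat y ^ 2 + ‖gradV P₀ P μ y‖ ^ 4)

open Classical in
/-- The Sontag feedback: `û(y) = −(a(y) + ρ(y))·∇V(y)/‖∇V(y)‖²` if `∇V(y) ≠ 0` and
`a(y) + ρ(y) > 0`, and `û(y) = 0` otherwise. -/
noncomputable def uhat {d L : ℕ} (P₀ : Matrix (Fin d) (Fin d) ℝ)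
    (P : Fin L → Matrix (Fin d) (Fin d) ℝ) (μ : Fin L → EuclideanSpace ℝ (Fin d))
    (fhat : EuclideanSpace ℝ (Fin d) → EuclideanSpace ℝ (Fin d)) (ρ₀ : ℝ)
    (y : EuclideanSpace ℝ (Fin d)) : EuclideanSpace ℝ (Fin d) :=
  if gradV P₀ P μ y ≠ 0 ∧ 0 < aFun P₀ P μ fhat y + rhoFun P₀ P μ fhat ρ₀ y then
    (-((aFun P₀ P μ fhat y + rhoFun P₀ P μ fhat ρ₀ y) / ‖gradV P₀ P μ y‖ ^ 2)) •
      gradV P₀ P μ y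
  else 0

open Filter Topology

theorem hasDerivAt_max_zero_sq (s : ℝ) :
    HasDerivAt (fun r : ℝ => max r 0 ^ 2) (2 * max s 0) s := by
  rcases lt_trichotomy s 0 with hs | rfl | hs
  · have hloc : (fun r : ℝ => max r 0 ^ 2) =ᶠ[𝓝 s] fun _ => 0 := by
      filter_upwards [Iio_mem_nhds hs] with r hr
      simp [max_eq_right (Set.mem_Iio.1 hr).le]
    simpa [max_eq_right hs.le] using (hasDerivAt_const s (0 : ℝ)).congr_of_eventuallyEq hloc
  · rw [hasDerivAt_iff_tendsto_slope]
    have hslope : (fun r : ℝ => max r 0) =ᶠ[𝓝[≠] 0] slope (fun r : ℝ => max r 0 ^ 2) 0 := by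
      filter_upwards [self_mem_nhdsWithin] with r hr
      rcases le_or_gt r 0 with h | h
      · simp [slope_def_field, max_eq_right h]
      · simp [slope_def_field, max_eq_left h.le, sq, h.ne']
    simpa using ((continuous_id.max continuous_const).tendsto' 0 0 (by simp)).mono_left
      nhdsWithin_le_nhds |>.congr' hslope
  · have hloc : (fun r : ℝ => max r 0 ^ 2) =ᶠ[𝓝 s] fun r => r ^ 2 := by
      filter_upwards [Ioi_mem_nhds hs] with r hr
      simp [max_eq_left (Set.mem_Ioi.1 hr).le]
    simpa [max_eq_left hs.le] using (hasDerivAt_pow 2 s).congr_of_eventuallyEq hloc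

section Matrix

variable {d : ℕ} {P : Matrix (Fin d) (Fin d) ℝ}

theorem inner_mApp_left (hP : P.IsHermitian) (a b : EuclideanSpace ℝ (Fin d)) :
    ⟪mApp P a, b⟫ = ⟪a, mApp P b⟫ :=
  Matrix.isSymmetric_toEuclideanLin_iff.2 hP a b

theorem inner_mApp_self_nonneg (hP : P.PosSemidef) (y : EuclideanSpace ℝ (Fin d)) :
    0 ≤ ⟪y, mApp P y⟫ :=
  (Matrix.isPositive_toEuclideanLin_iff.2 hP).inner_nonneg_right y

theorem hasFDerivAt_mApp (x : EuclideanSpace ℝ (Fin d)) :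
    HasFDerivAt (mApp P) (LinearMap.toContinuousLinearMap (Matrix.toEuclideanLin P)) x :=
  (LinearMap.toContinuousLinearMap (Matrix.toEuclideanLin P)).hasFDerivAt

theorem hasGradientAt_sig (hP : P.IsHermitian) (μ x : EuclideanSpace ℝ (Fin d)) :
    HasGradientAt (sig P μ) (mApp P ((2 : ℝ) • x - μ)) x := by
  rw [hasGradientAt_iff_hasFDerivAt]
  have h := (hasFDerivAt_id x).inner ℝ ((hasFDerivAt_mApp (P := P) (x - μ)).comp x
    ((hasFDerivAt_id x).sub_const μ))
  refine h.congr_fderiv (ContinuousLinearMap.ext fun v => ?_)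
  have h2x : (2 : ℝ) • x - μ = x + (x - μ) := by rw [two_smul]; abel
  change ⟪x, mApp P v⟫ + ⟪v, mApp P (x - μ)⟫ = ⟪mApp P ((2 : ℝ) • x - μ), v⟫
  rw [h2x, show mApp P (x + (x - μ)) = mApp P x + mApp P (x - μ) from map_add _ _ _,
    inner_add_left, inner_mApp_left hP, real_inner_comm v]

end Matrix

section Lyapunov

variable {d L : ℕ} {P₀ : Matrix (Fin d) (Fin d) ℝ} {P : Fin L → Matrix (Fin d) (Fin d) ℝ}
  {μ : Fin L → EuclideanSpace ℝ (Fin d)}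

open InnerProductSpace in
theorem hasGradientAt_V (hP₀ : P₀.IsHermitian) (hP : ∀ l, (P l).IsHermitian)
    (x : EuclideanSpace ℝ (Fin d)) : HasGradientAt (V P₀ P μ) (gradV P₀ P μ x) x := by
  have hquad : HasGradientAt (fun y => ⟪y, mApp P₀ y⟫) (mApp P₀ ((2 : ℝ) • x - 0)) x := by
    convert hasGradientAt_sig hP₀ 0 x using 1
    funext y
    rw [sig, sub_zero]
  have hpen : ∀ l ∈ Finset.univ, HasFDerivAt (fun y => max (sig (P l) (μ l) y) 0 ^ 2)
      ((2 * max (sig (P l) (μ l) x) 0) • toDual ℝ _ (mApp (P l) ((2 : ℝ) • x - μ l))) x :=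
    fun l _ => (hasDerivAt_max_zero_sq _).comp_hasFDerivAt x
      (hasGradientAt_sig (hP l) (μ l) x).hasFDerivAt
  rw [hasGradientAt_iff_hasFDerivAt]
  refine (hquad.hasFDerivAt.add (HasFDerivAt.fun_sum hpen)).congr_fderiv ?_
  ext v
  simp [gradV, mApp, Finset.mul_sum, mul_assoc]

theorem lam_mul_norm_sq_le_V {lam : ℝ}
    (hlb : ∀ z : EuclideanSpace ℝ (Fin d), lam * ‖z‖ ^ 2 ≤ ⟪z, mApp P₀ z⟫)
    (y : EuclideanSpace ℝ (Fin d)) : lam * ‖y‖ ^ 2 ≤ V P₀ P μ y :=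
  (hlb y).trans (le_add_of_nonneg_right (Finset.sum_nonneg fun _ _ => sq_nonneg _))

theorem two_mul_V_le_inner_gradV (hP₀ : P₀.IsHermitian) (hP : ∀ l, (P l).PosSemidef)
    (y : EuclideanSpace ℝ (Fin d)) : 2 * V P₀ P μ y ≤ ⟪gradV P₀ P μ y, y⟫ := by
  have hpen : ∀ l, max (sig (P l) (μ l) y) 0 ^ 2 ≤
      ⟪max (sig (P l) (μ l) y) 0 • mApp (P l) ((2 : ℝ) • y - μ l), y⟫ := by
    intro l
    set σ := sig (P l) (μ l) y
    have hsplit : ⟪mApp (P l) ((2 : ℝ) • y - μ l), y⟫ = ⟪y, mApp (P l) y⟫ + σ := by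
      rw [show (2 : ℝ) • y - μ l = y + (y - μ l) by rw [two_smul]; abel,
        show mApp (P l) (y + (y - μ l)) = mApp (P l) y + mApp (P l) (y - μ l) from map_add _ _ _,
        inner_add_left, inner_mApp_left (hP l).isHermitian,
        real_inner_comm y (mApp (P l) (y - μ l))]
      rfl
    have hσ : max σ 0 * σ = max σ 0 ^ 2 := by
      rcases le_total σ 0 with h | h
      · simp [max_eq_right h]
      · rw [max_eq_left h, sq]
    rw [real_inner_smul_left, hsplit]
    nlinarith [le_max_right σ 0, inner_mApp_self_nonneg (hP l) y]
  rw [V, gradV, inner_add_left, real_inner_smul_left, real_inner_smul_left, sum_inner,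
    inner_mApp_left hP₀, mul_add]
  gcongr with l
  exact hpen l

theorem four_mul_lam_mul_V_le_norm_gradV_sq {lam : ℝ} (hlam : 0 ≤ lam)
    (hP₀ : P₀.IsHermitian) (hP : ∀ l, (P l).PosSemidef)
    (hlb : ∀ z : EuclideanSpace ℝ (Fin d), lam * ‖z‖ ^ 2 ≤ ⟪z, mApp P₀ z⟫)
    (y : EuclideanSpace ℝ (Fin d)) : 4 * lam * V P₀ P μ y ≤ ‖gradV P₀ P μ y‖ ^ 2 := by
  have hnorm : lam * ‖y‖ ^ 2 ≤ V P₀ P μ y := lam_mul_norm_sq_le_V hlb y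
  have hinner : 2 * V P₀ P μ y ≤ ‖gradV P₀ P μ y‖ * ‖y‖ :=
    (two_mul_V_le_inner_gradV hP₀ hP y).trans (real_inner_le_norm _ _)
  have hV : 0 ≤ V P₀ P μ y := (by positivity : 0 ≤ lam * ‖y‖ ^ 2).trans hnorm
  rcases hV.eq_or_lt with hV0 | hVpos
  · rw [← hV0, mul_zero]
    positivity
  refine le_of_mul_le_mul_right ?_ hVpos
  calc 4 * lam * V P₀ P μ y * V P₀ P μ y = lam * (2 * V P₀ P μ y) ^ 2 := by ring
    _ ≤ lam * (‖gradV P₀ P μ y‖ * ‖y‖) ^ 2 := by gcongr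
    _ = ‖gradV P₀ P μ y‖ ^ 2 * (lam * ‖y‖ ^ 2) := by ring
    _ ≤ ‖gradV P₀ P μ y‖ ^ 2 * V P₀ P μ y := by gcongr

end Lyapunov

open Classical in
noncomputable def sontag {E : Type*} [NormedAddCommGroup E] [InnerProductSpace ℝ E]
    (ρ₀ : ℝ) (g f : E) : E :=
  if g ≠ 0 ∧ 0 < ⟪g, f⟫ + ρ₀ * √(⟪g, f⟫ ^ 2 + ‖g‖ ^ 4) then
    (-((⟪g, f⟫ + ρ₀ * √(⟪g, f⟫ ^ 2 + ‖g‖ ^ 4)) / ‖g‖ ^ 2)) • g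
  else 0

theorem inner_add_sontag_le {E : Type*} [NormedAddCommGroup E] [InnerProductSpace ℝ E]
    {ρ₀ : ℝ} (hρ₀ : 0 ≤ ρ₀) (g f : E) : ⟪g, f + sontag ρ₀ g f⟫ ≤ -(ρ₀ * ‖g‖ ^ 2) := by
  set r := ρ₀ * √(⟪g, f⟫ ^ 2 + ‖g‖ ^ 4)
  have hr : ρ₀ * ‖g‖ ^ 2 ≤ r := by
    refine mul_le_mul_of_nonneg_left ((Real.le_sqrt (by positivity) (by positivity)).2 ?_) hρ₀
    nlinarith [sq_nonneg ⟪g, f⟫]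
  rw [sontag, inner_add_right]
  split_ifs with h
  · rw [real_inner_smul_right, real_inner_self_eq_norm_sq,
      neg_mul, div_mul_cancel₀ _ (pow_pos (norm_pos_iff.2 h.1) 2).ne']
    linarith
  · rw [inner_zero_right, add_zero]
    by_cases hg : g = 0
    · simp [hg]
    · linarith [not_lt.1 fun hpos => h ⟨hg, hpos⟩]

theorem uhat_eq_sontag {d L : ℕ} (P₀ : Matrix (Fin d) (Fin d) ℝ)
    (P : Fin L → Matrix (Fin d) (Fin d) ℝ) (μ : Fin L → EuclideanSpace ℝ (Fin d))
    (fhat : EuclideanSpace ℝ (Fin d) → EuclideanSpace ℝ (Fin d)) (ρ₀ : ℝ)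
    (y : EuclideanSpace ℝ (Fin d)) :
    uhat P₀ P μ fhat ρ₀ y = sontag ρ₀ (gradV P₀ P μ y) (fhat y) := by
  unfold uhat sontag aFun rhoFun
  congr

theorem inner_gradV_closedLoop_le {d L : ℕ} {P₀ : Matrix (Fin d) (Fin d) ℝ}
    {P : Fin L → Matrix (Fin d) (Fin d) ℝ} {μ : Fin L → EuclideanSpace ℝ (Fin d)}
    (hP₀ : P₀.IsHermitian) (hP : ∀ l, (P l).PosSemidef)
    (fhat : EuclideanSpace ℝ (Fin d) → EuclideanSpace ℝ (Fin d)) {ρ₀ lam : ℝ} (hρ₀ : 0 ≤ ρ₀)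
    (hlam : 0 ≤ lam) (hlb : ∀ z : EuclideanSpace ℝ (Fin d), lam * ‖z‖ ^ 2 ≤ ⟪z, mApp P₀ z⟫)
    (y : EuclideanSpace ℝ (Fin d)) :
    ⟪gradV P₀ P μ y, fhat y + uhat P₀ P μ fhat ρ₀ y⟫ ≤ -(ρ₀ * lam) * V P₀ P μ y := by
  have hV : 0 ≤ V P₀ P μ y :=
    (by positivity : 0 ≤ lam * ‖y‖ ^ 2).trans (lam_mul_norm_sq_le_V hlb y)
  have hgrad := four_mul_lam_mul_V_le_norm_gradV_sq hlam hP₀ hP hlb (μ := μ) y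
  calc ⟪gradV P₀ P μ y, fhat y + uhat P₀ P μ fhat ρ₀ y⟫ ≤ -(ρ₀ * ‖gradV P₀ P μ y‖ ^ 2) := by
        rw [uhat_eq_sontag]
        exact inner_add_sontag_le hρ₀ _ _
    _ ≤ -(ρ₀ * lam) * V P₀ P μ y := by
        nlinarith [mul_le_mul_of_nonneg_left hgrad hρ₀, mul_nonneg (mul_nonneg hρ₀ hlam) hV]

theorem le_mul_exp_of_hasDerivAt_le_mul {f f' : ℝ → ℝ} {K : ℝ}
    (hf : ∀ t, 0 ≤ t → HasDerivAt f (f' t) t) (hbound : ∀ t, 0 ≤ t → f' t ≤ K * f t)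
    {t : ℝ} (ht : 0 ≤ t) : f t ≤ f 0 * Real.exp (K * t) := by
  have h := le_gronwallBound_of_liminf_deriv_right_le (δ := f 0) (ε := 0) (a := 0) (b := t)
    (fun s hs => (hf s hs.1).continuousAt.continuousWithinAt)
    (fun s hs _ hr => (hf s hs.1).hasDerivWithinAt.liminf_right_slope_le hr) le_rfl
    (fun s hs => by simpa using hbound s hs.1) t ⟨ht, le_rfl⟩
  simpa [gronwallBound_ε0] using h

/-- for the closed-loop system `ẋ = f̂(x) + û(x)` with the Sontag
feedback `û` (ρ₀ > 0), if `λ > 0` satisfies `⟨x, P₀ x⟩ ≥ λ‖x‖²` for all `x`, then every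
differentiable solution `x : [0,∞) → ℝ^d` satisfies
`V(x(t)) ≤ V(x(0))·exp(−ρ₀ λ t)` and `‖x(t)‖² ≤ (V(x(0))/λ)·exp(−ρ₀ λ t)` for all
`t ≥ 0`; in particular the origin is globally exponentially stable. -/
theorem stmt_14 {d L : ℕ} (P₀ : Matrix (Fin d) (Fin d) ℝ)
    (P : Fin L → Matrix (Fin d) (Fin d) ℝ) (μ : Fin L → EuclideanSpace ℝ (Fin d))
    (hP₀ : P₀.PosDef) (hP : ∀ l, (P l).PosDef)
    (fhat : EuclideanSpace ℝ (Fin d) → EuclideanSpace ℝ (Fin d))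
    (ρ₀ : ℝ) (hρ₀ : 0 < ρ₀) (lam : ℝ) (hlam : 0 < lam)
    (hlb : ∀ x : EuclideanSpace ℝ (Fin d), lam * ‖x‖ ^ 2 ≤ ⟪x, mApp P₀ x⟫)
    (x : ℝ → EuclideanSpace ℝ (Fin d))
    (hx : ∀ t : ℝ, 0 ≤ t →
      HasDerivAt x (fhat (x t) + uhat P₀ P μ fhat ρ₀ (x t)) t) :
    ∀ t : ℝ, 0 ≤ t →
      V P₀ P μ (x t) ≤ V P₀ P μ (x 0) * Real.exp (-(ρ₀ * lam * t)) ∧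
      ‖x t‖ ^ 2 ≤ (V P₀ P μ (x 0) / lam) * Real.exp (-(ρ₀ * lam * t)) := by
  intro t ht
  have hdecay : V P₀ P μ (x t) ≤ V P₀ P μ (x 0) * Real.exp (-(ρ₀ * lam * t)) := by
    rw [← neg_mul]
    refine le_mul_exp_of_hasDerivAt_le_mul (f := fun s => V P₀ P μ (x s))
      (f' := fun s => ⟪gradV P₀ P μ (x s), fhat (x s) + uhat P₀ P μ fhat ρ₀ (x s)⟫)
      (fun s hs => ?_) (fun s _ => ?_) ht
    · exact (hasGradientAt_V hP₀.isHermitian (fun l => (hP l).isHermitian)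
        (x s)).hasFDerivAt.comp_hasDerivAt s (hx s hs)
    · exact inner_gradV_closedLoop_le hP₀.isHermitian (fun l => (hP l).posSemidef) fhat hρ₀.le
        hlam.le hlb (x s)
  refine ⟨hdecay, ?_⟩
  rw [div_mul_eq_mul_div, le_div_iff₀ hlam, mul_comm]
  exact (lam_mul_norm_sq_le_V hlb (x t)).trans hdecay
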